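/- arXiv:math/0703077 — 5 statements merged into one kernel-verified Lean document; each statement's English description precedes it below -/
import Mathlib

section
/- If E := ∫_I a(x) dF is finite, then lim_{c→∞} Ψ(c) = E, where Ψ(c) = 1/∫_I (a(x)+c)^{-1} dF − c. -/
open MeasureTheory Filter Set Topology

theorem psi_tendsto_E (F : Measure ℝ) [IsProbabilityMeasure F] (a : ℝ → ℝ) (ξ : ℝ)
    (ha : Measurable a) (hξ : ∀ᵐ x ∂F, ξ ≤ a x)
    (hnc : ¬ ∃ r : ℝ, a =ᵐ[F] fun _ => r)
    (hint : ∀ c : ℝ, -ξ < c → Integrable (fun x => (a x + c)⁻¹) F)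
    (hE : Integrable a F) :
    Tendsto (fun c : ℝ => (∫ x, (a x + c)⁻¹ ∂F)⁻¹ - c) atTop (nhds (∫ x, a x ∂F)) := by
  have hptlim : ∀ x : ℝ, Tendsto (fun c : ℝ => c * (a x + c)⁻¹) atTop (𝓝 1) := by
    intro x
    have hinv : Tendsto (fun c : ℝ => (a x + c)⁻¹) atTop (𝓝 0) :=
      (tendsto_atTop_add_const_left atTop (a x) tendsto_id).inv_tendsto_atTop
    have h1 : Tendsto (fun c : ℝ => 1 - a x * (a x + c)⁻¹) atTop (𝓝 (1 - a x * 0)) :=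
      tendsto_const_nhds.sub (tendsto_const_nhds.mul hinv)
    rw [mul_zero, sub_zero] at h1
    refine Tendsto.congr' ?_ h1
    filter_upwards [eventually_gt_atTop (-a x)] with c hc
    have h0 : a x + c ≠ 0 := by intro h; linarith [neg_lt_iff_pos_add.mp hc]
    field_simp
    ring
  have hD : Tendsto (fun c : ℝ => ∫ x, c * (a x + c)⁻¹ ∂F) atTop (𝓝 1) := by
    have key := MeasureTheory.tendsto_integral_filter_of_dominated_convergence (μ := F)
      (F := fun (c : ℝ) x => c * (a x + c)⁻¹) (f := fun _ => (1 : ℝ)) (bound := fun _ => (2 : ℝ))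
      (Eventually.of_forall fun c =>
        (measurable_const.mul ((ha.add_const c).inv)).aestronglyMeasurable)
      ?_ (integrable_const 2) (Eventually.of_forall fun x => hptlim x)
    · simpa using key
    · filter_upwards [eventually_ge_atTop (1 + 2 * |ξ|)] with c hc
      filter_upwards [hξ] with x hx
      have h1 : 0 < a x + c := by nlinarith [neg_abs_le ξ, abs_nonneg ξ]
      have h2 : 0 < c := by nlinarith [abs_nonneg ξ]
      rw [Real.norm_eq_abs, abs_of_nonneg (by positivity), ← div_eq_mul_inv, div_le_iff₀ h1]
      nlinarith [neg_abs_le ξ]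
  have hN : Tendsto (fun c : ℝ => ∫ x, a x * (c * (a x + c)⁻¹) ∂F) atTop (𝓝 (∫ x, a x ∂F)) := by
    refine MeasureTheory.tendsto_integral_filter_of_dominated_convergence (μ := F)
      (F := fun (c : ℝ) x => a x * (c * (a x + c)⁻¹)) (f := a) (bound := fun x => |a x| * 2)
      (Eventually.of_forall fun c =>
        (ha.mul (measurable_const.mul ((ha.add_const c).inv))).aestronglyMeasurable)
      ?_ (hE.abs.mul_const 2) (Eventually.of_forall fun x => by
        simpa using tendsto_const_nhds.mul (hptlim x))
    filter_upwards [eventually_ge_atTop (1 + 2 * |ξ|)] with c hc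
    filter_upwards [hξ] with x hx
    have h1 : 0 < a x + c := by nlinarith [neg_abs_le ξ, abs_nonneg ξ]
    have h2 : 0 < c := by nlinarith [abs_nonneg ξ]
    rw [Real.norm_eq_abs, abs_mul]
    have h3 : |c * (a x + c)⁻¹| ≤ 2 := by
      rw [abs_of_nonneg (by positivity), ← div_eq_mul_inv, div_le_iff₀ h1]
      nlinarith [neg_abs_le ξ]
    exact mul_le_mul_of_nonneg_left h3 (abs_nonneg _)
  have hdiv : Tendsto (fun c : ℝ =>
      (∫ x, a x * (c * (a x + c)⁻¹) ∂F) / (∫ x, c * (a x + c)⁻¹ ∂F)) atTop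
      (𝓝 (∫ x, a x ∂F)) := by
    have := hN.div hD one_ne_zero; rw [div_one] at this; exact this
  refine Tendsto.congr' ?_ hdiv
  filter_upwards [eventually_ge_atTop (1 + 2 * |ξ|)] with c hc
  have hcξ : -ξ < c := by nlinarith [neg_abs_le ξ, abs_nonneg ξ, le_abs_self ξ]
  have hc0 : 0 < c := by nlinarith [abs_nonneg ξ]
  set I := ∫ x, (a x + c)⁻¹ ∂F with hIdef
  have hintc := hint c hcξ
  have hfpos : ∀ᵐ x ∂F, 0 < (a x + c)⁻¹ := hξ.mono fun x hx => inv_pos.2 (by linarith)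
  have hIpos : 0 < I := by
    have h0 : 0 ≤ I := integral_nonneg_of_ae (hfpos.mono fun x h => h.le)
    rcases h0.lt_or_eq with h | h
    · exact h
    · exfalso
      have hz : (fun x => (a x + c)⁻¹) =ᵐ[F] 0 :=
        (integral_eq_zero_iff_of_nonneg_ae (hfpos.mono fun x h => h.le) hintc).mp h.symm
      haveI : (ae F).NeBot := IsProbabilityMeasure.ae_neBot
      obtain ⟨x, h1, h2⟩ := (hfpos.and hz).exists
      rw [Pi.zero_apply] at h2
      exact h1.ne' h2
  have hDc : (∫ x, c * (a x + c)⁻¹ ∂F) = c * I := integral_const_mul c _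
  have hJ : (∫ x, a x * (a x + c)⁻¹ ∂F) = 1 - c * I := by
    have heq : (fun x => a x * (a x + c)⁻¹) =ᵐ[F] fun x => 1 - c * (a x + c)⁻¹ := by
      filter_upwards [hξ] with x hx
      have h1 : a x + c ≠ 0 := by intro h; linarith
      field_simp
      ring
    rw [integral_congr_ae heq, integral_sub (integrable_const 1) (hintc.const_mul c),
      integral_const_mul]
    simp [hIdef]
  have hNc : (∫ x, a x * (c * (a x + c)⁻¹) ∂F) = c * (1 - c * I) := by
    have h : (fun x => a x * (c * (a x + c)⁻¹)) = fun x => c * (a x * (a x + c)⁻¹) := by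
      funext x; ring
    rw [h, integral_const_mul, hJ]
  rw [hNc, hDc]
  have hI0 : I ≠ 0 := hIpos.ne'
  have hc0' : c ≠ 0 := hc0.ne'
  field_simp
end

section
/- If ∫_I a(x) dF = ∞, then lim_{c→∞} Ψ(c) = ∞, where Ψ(c) = 1/∫_I (a(x)+c)^{-1} dF − c. -/
open MeasureTheory Filter Set Topology

theorem psi_tendsto_top (F : Measure ℝ) [IsProbabilityMeasure F] (a : ℝ → ℝ) (ξ : ℝ)
    (ha : Measurable a) (hξ : ∀ᵐ x ∂F, ξ ≤ a x)
    (hnc : ¬ ∃ r : ℝ, a =ᵐ[F] fun _ => r)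
    (hint : ∀ c : ℝ, -ξ < c → Integrable (fun x => (a x + c)⁻¹) F)
    (hE : ∫⁻ x, ENNReal.ofReal (a x - ξ) ∂F = ⊤) :
    Tendsto (fun c : ℝ => (∫ x, (a x + c)⁻¹ ∂F)⁻¹ - c) atTop atTop := by
  rw [tendsto_atTop]
  intro M
  -- truncated functions
  have hmono : Monotone (fun (n : ℕ) (x : ℝ) => ENNReal.ofReal (min (a x) (ξ + n) - ξ)) := by
    intro n m hnm x
    refine ENNReal.ofReal_le_ofReal ?_
    have : (n : ℝ) ≤ m := by exact_mod_cast hnm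
    have : min (a x) (ξ + n) ≤ min (a x) (ξ + m) := by
      exact min_le_min le_rfl (by linarith)
    linarith
  have hsup : ∀ x, (⨆ n : ℕ, ENNReal.ofReal (min (a x) (ξ + n) - ξ))
      = ENNReal.ofReal (a x - ξ) := by
    intro x
    apply le_antisymm
    · exact iSup_le fun n => ENNReal.ofReal_le_ofReal
        (by have := min_le_left (a x) (ξ + (n : ℝ)); linarith)
    · refine le_iSup_of_le ⌈a x - ξ⌉₊ (le_of_eq ?_)
      have h1 : a x ≤ ξ + (⌈a x - ξ⌉₊ : ℝ) := by
        have := Nat.le_ceil (a x - ξ); linarith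
      rw [min_eq_left h1]
  have hgm : ∀ n : ℕ, Measurable fun x => ENNReal.ofReal (min (a x) (ξ + n) - ξ) :=
    fun n => ((ha.min measurable_const).sub measurable_const).ennreal_ofReal
  have hlsup : (⨆ n : ℕ, ∫⁻ x, ENNReal.ofReal (min (a x) (ξ + n) - ξ) ∂F) = ⊤ := by
    rw [← lintegral_iSup hgm hmono]
    simp_rw [hsup]
    exact hE
  -- choose a good truncation level
  obtain ⟨n, hn⟩ : ∃ n : ℕ, ENNReal.ofReal (max (M - ξ + 1) 0)
      < ∫⁻ x, ENNReal.ofReal (min (a x) (ξ + n) - ξ) ∂F := by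
    rw [← lt_iSup_iff, hlsup]
    exact ENNReal.ofReal_lt_top
  set N : ℝ := ξ + n with hN
  set f : ℝ → ℝ := fun x => min (a x) N - ξ with hf
  have hfm : Measurable f := (ha.min measurable_const).sub measurable_const
  have hξN : ξ ≤ N := le_add_of_nonneg_right (Nat.cast_nonneg n)
  have hf0 : ∀ᵐ x ∂F, 0 ≤ f x := by
    filter_upwards [hξ] with x hx
    have h1 : ξ ≤ min (a x) N := le_min hx hξN
    simp only [hf]; linarith
  have hfn : ∀ x, f x ≤ n := fun x => by
    have h1 := min_le_right (a x) N
    simp only [hf]; linarith [hN.le, hN.ge]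
  have hfint : Integrable f F := by
    refine Integrable.mono' (integrable_const (n : ℝ)) hfm.aestronglyMeasurable ?_
    filter_upwards [hf0] with x hx
    rw [Real.norm_eq_abs, abs_le]
    exact ⟨by linarith, hfn x⟩
  have hfin : (∫⁻ x, ENNReal.ofReal (min (a x) (ξ + n) - ξ) ∂F) ≠ ⊤ := by
    refine ne_top_of_le_ne_top (b := ENNReal.ofReal n) ?_ ?_
    · exact ENNReal.ofReal_ne_top
    · calc (∫⁻ x, ENNReal.ofReal (min (a x) (ξ + n) - ξ) ∂F)
          ≤ ∫⁻ _, ENNReal.ofReal n ∂F :=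
            lintegral_mono fun x => ENNReal.ofReal_le_ofReal (hfn x)
        _ = ENNReal.ofReal n := by simp
  set T : ℝ := ∫ x, f x ∂F with hTdef
  have hTeq : T = (∫⁻ x, ENNReal.ofReal (min (a x) (ξ + n) - ξ) ∂F).toReal := by
    rw [hTdef, integral_eq_lintegral_of_nonneg_ae hf0 hfm.aestronglyMeasurable]
  have hT : M - ξ + 1 ≤ T := by
    have h1 : max (M - ξ + 1) 0 ≤ T := by
      rw [hTeq]
      exact (ENNReal.ofReal_le_iff_le_toReal hfin).mp hn.le
    exact le_trans (le_max_left _ _) h1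
  -- now prove the eventual bound
  filter_upwards [eventually_ge_atTop (1 - ξ), eventually_ge_atTop (1 - N),
    eventually_ge_atTop 0, eventually_ge_atTop (1 - M),
    eventually_ge_atTop (M * N - M * T - N * ξ)] with c hc1 hc2 hc0 hc3 hc4
  have hP : (1 : ℝ) ≤ ξ + c := by linarith
  have hQ : (1 : ℝ) ≤ N + c := by linarith
  have hD : (0 : ℝ) < (N + c) * (ξ + c) := by nlinarith
  have hIint : Integrable (fun x => (a x + c)⁻¹) F := hint c (by linarith)
  set I : ℝ := ∫ x, (a x + c)⁻¹ ∂F with hIdef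
  -- pointwise bound
  have hptw : ∀ᵐ x ∂F, (a x + c)⁻¹ ≤ (N + c - f x) / ((N + c) * (ξ + c)) := by
    filter_upwards [hξ] with x hx
    have hm1 : ξ ≤ min (a x) N := le_min hx hξN
    have hm2 : min (a x) N ≤ N := min_le_right _ _
    have hm3 : min (a x) N ≤ a x := min_le_left _ _
    have htc : (0 : ℝ) < a x + c := by linarith
    rw [inv_eq_one_div, div_le_div_iff₀ htc hD]
    have key : (0 : ℝ) ≤ (min (a x) N - ξ) * (N - min (a x) N) :=
      mul_nonneg (by linarith) (by linarith)
    have key2 : (0 : ℝ) ≤ (a x - min (a x) N) * (N + c - min (a x) N + ξ) :=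
      mul_nonneg (by linarith) (by linarith)
    simp only [hf]
    nlinarith [key, key2]
  have hRint : Integrable (fun x => (N + c - f x) / ((N + c) * (ξ + c))) F :=
    ((integrable_const (N + c)).sub hfint).div_const _
  have hIle : I ≤ (N + c - T) / ((N + c) * (ξ + c)) := by
    have h1 := integral_mono_ae hIint hRint hptw
    rw [hIdef]
    calc (∫ x, (a x + c)⁻¹ ∂F) ≤ ∫ x, (N + c - f x) / ((N + c) * (ξ + c)) ∂F := h1
      _ = (∫ x, (N + c - f x) ∂F) / ((N + c) * (ξ + c)) := integral_div _ _
      _ = (N + c - T) / ((N + c) * (ξ + c)) := by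
          rw [integral_sub (integrable_const _) hfint, integral_const]
          simp [hTdef]
  -- positivity of I
  have hnn : 0 ≤ᵐ[F] fun x => (a x + c)⁻¹ := by
    filter_upwards [hξ] with x hx
    have h1 : (0 : ℝ) < a x + c := by linarith
    positivity
  have hpos : 0 < I := by
    rw [hIdef, integral_pos_iff_support_of_nonneg_ae hnn hIint]
    set s : Set ℝ := Function.support fun x => (a x + c)⁻¹ with hs
    have hne : ∀ᵐ x ∂F, x ∈ s := by
      filter_upwards [hξ] with x hx
      have h1 : (0 : ℝ) < a x + c := by linarith
      simp only [hs, Function.mem_support]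
      positivity
    have h0 : F sᶜ = 0 := by
      have h2 := ae_iff.mp hne
      simpa [Set.compl_def] using h2
    have h1 : (1 : ENNReal) ≤ F s := by
      have h2 : F univ ≤ F s + F sᶜ := by
        rw [← union_compl_self s]; exact measure_union_le _ _
      rwa [measure_univ, h0, add_zero] at h2
    exact lt_of_lt_of_le zero_lt_one h1
  -- conclude
  have hMc : (1 : ℝ) ≤ M + c := by linarith
  have hpoly : (M + c) * (N + c - T) ≤ (N + c) * (ξ + c) := by
    nlinarith [mul_nonneg hc0 (show (0 : ℝ) ≤ ξ + T - M - 1 by linarith)]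
  have hB : (M + c) * I ≤ 1 := by
    calc (M + c) * I ≤ (M + c) * ((N + c - T) / ((N + c) * (ξ + c))) :=
          mul_le_mul_of_nonneg_left hIle (by linarith)
      _ = ((M + c) * (N + c - T)) / ((N + c) * (ξ + c)) := by ring
      _ ≤ 1 := (div_le_one hD).mpr hpoly
  have hfinal : M + c ≤ I⁻¹ := by
    rw [← one_div]
    exact (le_div_iff₀ hpos).mpr hB
  linarith
end

section
/- The function Ψ(c) = 1/∫_I (a(x)+c)^{-1} dF − c is strictly concave on (−ξ, ∞); precisely, Ψ''(c) = 2((∫_I (a+c)^{-2} dF)^2 − ∫_I (a+c)^{-1} dF · ∫_I (a+c)^{-3} dF)/(∫_I (a+c)^{-1} dF)^3 < 0 for c > −ξ. -/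
open MeasureTheory Filter Set Topology

lemma pt_deriv (y : ℝ) (n : ℕ) (hn : 1 ≤ n) {t : ℝ} (ht : 0 < y + t) :
    HasDerivAt (fun s => ((y + s) ^ n)⁻¹) (-(n : ℝ) * ((y + t) ^ (n + 1))⁻¹) t := by
  have h1 : HasDerivAt (fun s : ℝ => y + s) 1 t := (hasDerivAt_id t).const_add y
  have h2 : HasDerivAt (fun s => ((y + s) ^ n)⁻¹)
      (-(↑n * (y + t) ^ (n - 1) * 1) / ((y + t) ^ n) ^ 2) t := (h1.pow n).inv (pow_ne_zero n ht.ne')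
  convert h2 using 1
  have hne : (y + t) ≠ 0 := ht.ne'
  have : n - 1 + (n + 1) = n * 2 := by omega
  have key : (y+t)^(n-1) * (y+t)^(n+1) = ((y+t)^n)^2 := by rw [← pow_add, this, pow_mul]
  rw [← key]
  field_simp

lemma int_deriv (F : Measure ℝ) [IsProbabilityMeasure F] (a : ℝ → ℝ) (ξ : ℝ)
    (ha : Measurable a) (hξ : ∀ᵐ x ∂F, ξ ≤ a x)
    (hint : ∀ c : ℝ, -ξ < c → ∀ n : ℕ, 1 ≤ n →
      Integrable (fun x => ((a x + c) ^ n)⁻¹) F)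
    (n : ℕ) (hn : 1 ≤ n) {c : ℝ} (hc : -ξ < c) :
    HasDerivAt (fun t => ∫ x, ((a x + t) ^ n)⁻¹ ∂F)
      (-(n : ℝ) * ∫ x, ((a x + c) ^ (n + 1))⁻¹ ∂F) c := by
  set ε : ℝ := (c + ξ) / 2 with hε
  have hεpos : 0 < ε := by simp only [hε]; linarith
  have hc' : -ξ < c - ε := by simp only [hε]; linarith
  have hkey : ∀ᵐ x ∂F, ∀ t ∈ Metric.ball c ε, ε ≤ a x + t := by
    filter_upwards [hξ] with x hx t htb
    have := (Real.dist_eq t c ▸ Metric.mem_ball.1 htb)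
    have h1 : c - ε < t := by cases abs_lt.1 this; linarith
    have : ξ + (c - ε) = ε := by simp only [hε]; ring
    linarith
  have meas : ∀ (t : ℝ) (m : ℕ), AEStronglyMeasurable (fun x => ((a x + t) ^ m)⁻¹) F :=
    fun t m => (((ha.add_const t).pow_const m).inv).aestronglyMeasurable
  have key := hasDerivAt_integral_of_dominated_loc_of_deriv_le (μ := F)
      (F := fun t x => ((a x + t) ^ n)⁻¹)
      (F' := fun t x => -(n : ℝ) * ((a x + t) ^ (n + 1))⁻¹)
      (bound := fun x => (n : ℝ) * ((a x + (c - ε)) ^ (n + 1))⁻¹)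
      (Metric.ball_mem_nhds c hεpos)
      (Eventually.of_forall fun t => meas t n)
      (hint c hc n hn)
      ((meas c (n+1)).const_mul _)
      ?_ ((hint _ hc' (n+1) (by omega)).const_mul _) ?_
  · have := key.2
    rwa [integral_const_mul] at this
  · filter_upwards [hkey, hξ] with x hx hx2
    intro t htb
    have h1 : 0 < a x + t := lt_of_lt_of_le hεpos (hx t htb)
    have h2 : 0 < a x + (c - ε) := by
      have : ξ + (c - ε) = ε := by simp only [hε]; ring
      linarith
    have h3 : a x + (c - ε) ≤ a x + t := by
      have := (Real.dist_eq t c ▸ Metric.mem_ball.1 htb)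
      have := (abs_lt.1 this).1
      linarith
    have h4 : ((a x + t) ^ (n + 1))⁻¹ ≤ ((a x + (c - ε)) ^ (n + 1))⁻¹ := by
      apply inv_anti₀ (pow_pos h2 _)
      exact pow_le_pow_left₀ h2.le h3 _
    rw [norm_mul, norm_neg, Real.norm_natCast, Real.norm_eq_abs,
      abs_of_nonneg (inv_nonneg.2 (pow_nonneg h1.le _))]
    exact mul_le_mul_of_nonneg_left h4 (Nat.cast_nonneg n)
  · filter_upwards [hkey] with x hx t htb
    exact pt_deriv (a x) n hn (lt_of_lt_of_le hεpos (hx t htb))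

lemma int_pos (F : Measure ℝ) [IsProbabilityMeasure F] (a : ℝ → ℝ) (ξ : ℝ)
    (ha : Measurable a) (hξ : ∀ᵐ x ∂F, ξ ≤ a x)
    (hint : ∀ c : ℝ, -ξ < c → ∀ n : ℕ, 1 ≤ n →
      Integrable (fun x => ((a x + c) ^ n)⁻¹) F)
    (n : ℕ) (hn : 1 ≤ n) {c : ℝ} (hc : -ξ < c) :
    0 < ∫ x, ((a x + c) ^ n)⁻¹ ∂F := by
  have hpos : ∀ᵐ x ∂F, 0 < ((a x + c) ^ n)⁻¹ := by
    filter_upwards [hξ] with x hx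
    exact inv_pos.2 (pow_pos (by linarith) _)
  rw [integral_pos_iff_support_of_nonneg_ae (hpos.mono fun x hx => hx.le) (hint c hc n hn)]
  have h0 : F (Function.support fun x => ((a x + c) ^ n)⁻¹)ᶜ = 0 := by
    have h1 : F {x | ¬ ((a x + c) ^ n)⁻¹ ≠ 0} = 0 := ae_iff.1 (hpos.mono fun x hx => hx.ne')
    convert h1 using 2
    rfl
  rw [pos_iff_ne_zero]
  intro h
  have h2 := measure_union_le (μ := F) (Function.support fun x => ((a x + c) ^ n)⁻¹)
    (Function.support fun x => ((a x + c) ^ n)⁻¹)ᶜ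
  rw [Set.union_compl_self, h, h0, measure_univ] at h2
  simp at h2

lemma cs_strict (F : Measure ℝ) [IsProbabilityMeasure F] (a : ℝ → ℝ) (ξ : ℝ)
    (ha : Measurable a) (hξ : ∀ᵐ x ∂F, ξ ≤ a x)
    (hnc : ¬ ∃ r : ℝ, a =ᵐ[F] fun _ => r)
    (hint : ∀ c : ℝ, -ξ < c → ∀ n : ℕ, 1 ≤ n →
      Integrable (fun x => ((a x + c) ^ n)⁻¹) F)
    {c : ℝ} (hc : -ξ < c) :
    (∫ x, ((a x + c) ^ 2)⁻¹ ∂F) ^ 2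
      < (∫ x, (a x + c)⁻¹ ∂F) * ∫ x, ((a x + c) ^ 3)⁻¹ ∂F := by
  have hpow1 : (fun x => (a x + c)⁻¹) = fun x => ((a x + c) ^ 1)⁻¹ := by
    simp
  set I1 : ℝ := ∫ x, (a x + c)⁻¹ ∂F with hI1def
  set I2 : ℝ := ∫ x, ((a x + c) ^ 2)⁻¹ ∂F with hI2def
  set I3 : ℝ := ∫ x, ((a x + c) ^ 3)⁻¹ ∂F with hI3def
  have hI1 : 0 < I1 := by
    rw [hI1def, hpow1]; exact int_pos F a ξ ha hξ hint 1 le_rfl hc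
  have hint1 : Integrable (fun x => (a x + c)⁻¹) F := by
    rw [hpow1]; exact hint c hc 1 le_rfl
  set m : ℝ := I2 / I1 with hmdef
  have hφeq : (fun x => (a x + c)⁻¹ * ((a x + c)⁻¹ - m) ^ 2)
      = fun x => (((a x + c) ^ 3)⁻¹ - 2 * m * ((a x + c) ^ 2)⁻¹) + m ^ 2 * (a x + c)⁻¹ := by
    funext x
    rw [← inv_pow, ← inv_pow]
    ring
  have hint2 : Integrable (fun x => 2 * m * ((a x + c) ^ 2)⁻¹) F :=
    (hint c hc 2 (by norm_num)).const_mul _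
  have hintsub : Integrable (fun x => ((a x + c) ^ 3)⁻¹ - 2 * m * ((a x + c) ^ 2)⁻¹) F :=
    (hint c hc 3 (by norm_num)).sub hint2
  have hintm2 : Integrable (fun x => m ^ 2 * (a x + c)⁻¹) F := hint1.const_mul _
  have hφint : Integrable (fun x => (a x + c)⁻¹ * ((a x + c)⁻¹ - m) ^ 2) F := by
    rw [hφeq]
    exact hintsub.add hintm2
  have hφval : ∫ x, (a x + c)⁻¹ * ((a x + c)⁻¹ - m) ^ 2 ∂F = I3 - 2 * m * I2 + m ^ 2 * I1 := by
    rw [hφeq, integral_add hintsub hintm2,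
      integral_sub (hint c hc 3 (by norm_num)) hint2,
      integral_const_mul, integral_const_mul]
  have hφnonneg : ∀ᵐ x ∂F, 0 ≤ (a x + c)⁻¹ * ((a x + c)⁻¹ - m) ^ 2 := by
    filter_upwards [hξ] with x hx
    exact mul_nonneg (inv_nonneg.2 (by linarith)) (sq_nonneg _)
  have hφpos : 0 < ∫ x, (a x + c)⁻¹ * ((a x + c)⁻¹ - m) ^ 2 ∂F := by
    rcases (integral_nonneg_of_ae hφnonneg).lt_or_eq with h | h
    · exact h
    · exfalso
      have hzero : (fun x => (a x + c)⁻¹ * ((a x + c)⁻¹ - m) ^ 2) =ᵐ[F] 0 :=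
        (integral_eq_zero_iff_of_nonneg_ae hφnonneg hφint).1 h.symm
      apply hnc
      refine ⟨m⁻¹ - c, ?_⟩
      filter_upwards [hzero, hξ] with x hx0 hx
      have hpos : 0 < a x + c := by linarith
      have : ((a x + c)⁻¹ - m) ^ 2 = 0 := by
        rcases mul_eq_zero.1 hx0 with h' | h'
        · exact absurd h' (inv_pos.2 hpos).ne'
        · exact h'
      have hm : (a x + c)⁻¹ = m := by
        have := pow_eq_zero_iff (n := 2) (by norm_num) |>.1 this
        linarith
      have : a x + c = m⁻¹ := by
        rw [← hm, inv_inv]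
      show a x = m⁻¹ - c
      linarith
  rw [hφval] at hφpos
  have h5 : I3 - 2 * m * I2 + m ^ 2 * I1 = I3 - I2 ^ 2 / I1 := by
    rw [hmdef]; field_simp; ring
  rw [h5] at hφpos
  have := (div_lt_iff₀ hI1).1 (by linarith : I2 ^ 2 / I1 < I3)
  linarith

theorem psi_strictConcave (F : Measure ℝ) [IsProbabilityMeasure F] (a : ℝ → ℝ) (ξ : ℝ)
    (ha : Measurable a) (hξ : ∀ᵐ x ∂F, ξ ≤ a x)
    (hnc : ¬ ∃ r : ℝ, a =ᵐ[F] fun _ => r)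
    (hint : ∀ c : ℝ, -ξ < c → ∀ n : ℕ, 1 ≤ n →
      Integrable (fun x => ((a x + c) ^ n)⁻¹) F) :
    StrictConcaveOn ℝ (Set.Ioi (-ξ)) (fun c : ℝ => (∫ x, (a x + c)⁻¹ ∂F)⁻¹ - c) ∧
      ∀ c ∈ Set.Ioi (-ξ),
        iteratedDeriv 2 (fun c : ℝ => (∫ x, (a x + c)⁻¹ ∂F)⁻¹ - c) c
            = 2 * ((∫ x, ((a x + c) ^ 2)⁻¹ ∂F) ^ 2
                - (∫ x, (a x + c)⁻¹ ∂F) * ∫ x, ((a x + c) ^ 3)⁻¹ ∂F)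
              / (∫ x, (a x + c)⁻¹ ∂F) ^ 3 ∧
          2 * ((∫ x, ((a x + c) ^ 2)⁻¹ ∂F) ^ 2
                - (∫ x, (a x + c)⁻¹ ∂F) * ∫ x, ((a x + c) ^ 3)⁻¹ ∂F)
              / (∫ x, (a x + c)⁻¹ ∂F) ^ 3 < 0 := by
  set g : ℝ → ℝ := fun t => ∫ x, (a x + t)⁻¹ ∂F with hgdef
  set J : ℝ → ℝ := fun t => ∫ x, ((a x + t) ^ 2)⁻¹ ∂F with hJdef
  set K : ℝ → ℝ := fun t => ∫ x, ((a x + t) ^ 3)⁻¹ ∂F with hKdef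
  set Ψ : ℝ → ℝ := fun c => (g c)⁻¹ - c with hΨdef
  set Φ : ℝ → ℝ := fun t => J t / (g t) ^ 2 - 1 with hΦdef
  have hgpos : ∀ {c : ℝ}, -ξ < c → 0 < g c := by
    intro c hc
    have := int_pos F a ξ ha hξ hint 1 le_rfl hc
    simpa [hgdef] using this
  have hJpos : ∀ {c : ℝ}, -ξ < c → 0 < J c :=
    fun hc => int_pos F a ξ ha hξ hint 2 (by norm_num) hc
  have hKpos : ∀ {c : ℝ}, -ξ < c → 0 < K c :=
    fun hc => int_pos F a ξ ha hξ hint 3 (by norm_num) hc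
  have hgderiv : ∀ {c : ℝ}, -ξ < c → HasDerivAt g (-J c) c := by
    intro c hc
    have := int_deriv F a ξ ha hξ hint 1 le_rfl hc
    simp only [pow_one, Nat.cast_one, neg_one_mul] at this
    exact this
  have hJderiv : ∀ {c : ℝ}, -ξ < c → HasDerivAt J (-(2 : ℝ) * K c) c :=
    fun hc => int_deriv F a ξ ha hξ hint 2 (by norm_num) hc
  have hΨderiv : ∀ {c : ℝ}, -ξ < c → HasDerivAt Ψ (Φ c) c := by
    intro c hc
    have h1 := ((hgderiv hc).inv (hgpos hc).ne').sub (hasDerivAt_id c)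
    have he : - -J c / g c ^ 2 - 1 = Φ c := by
      rw [hΦdef]; simp [neg_div]
    rw [he] at h1
    exact h1
  have hΦderiv : ∀ {c : ℝ}, -ξ < c →
      HasDerivAt Φ (2 * ((J c) ^ 2 - g c * K c) / (g c) ^ 3) c := by
    intro c hc
    have h1 : HasDerivAt (fun t => J t / (g t) ^ 2 - 1) ((-2 * K c * (g c) ^ 2
        - J c * (((2 : ℕ) : ℝ) * g c ^ (2 - 1) * -J c)) / ((g c) ^ 2) ^ 2) c :=
      ((hJderiv hc).div ((hgderiv hc).pow 2)
      (pow_ne_zero 2 (hgpos hc).ne')).sub_const 1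
    convert h1 using 1
    have hgne : g c ≠ 0 := (hgpos hc).ne'
    field_simp
    ring
  have hderivΨ : ∀ {c : ℝ}, -ξ < c → deriv Ψ c = Φ c :=
    fun hc => (hΨderiv hc).deriv
  have hderiv2 : ∀ {c : ℝ}, -ξ < c →
      deriv (deriv Ψ) c = 2 * ((J c) ^ 2 - g c * K c) / (g c) ^ 3 := by
    intro c hc
    have hev : deriv Ψ =ᶠ[𝓝 c] Φ := by
      filter_upwards [isOpen_Ioi.mem_nhds (show c ∈ Ioi (-ξ) from hc)] with t ht
      exact hderivΨ ht
    rw [hev.deriv_eq]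
    exact (hΦderiv hc).deriv
  have hneg : ∀ {c : ℝ}, -ξ < c → 2 * ((J c) ^ 2 - g c * K c) / (g c) ^ 3 < 0 := by
    intro c hc
    have hcs := cs_strict F a ξ ha hξ hnc hint hc
    apply div_neg_of_neg_of_pos
    · have : J c ^ 2 < g c * K c := hcs
      linarith
    · exact pow_pos (hgpos hc) 3
  constructor
  · apply strictConcaveOn_of_deriv2_neg (convex_Ioi _)
    · intro t ht
      exact ((hΨderiv ht).differentiableAt.continuousAt).continuousWithinAt
    · intro t ht
      rw [interior_Ioi] at ht
      have : deriv^[2] Ψ t = deriv (deriv Ψ) t := by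
        rw [Function.iterate_succ_apply', Function.iterate_one]
      rw [this, hderiv2 ht]
      exact hneg ht
  · intro c hc
    have hc' : -ξ < c := hc
    constructor
    · rw [show iteratedDeriv 2 Ψ = deriv (deriv Ψ) by
        rw [iteratedDeriv_succ, iteratedDeriv_one]]
      exact hderiv2 hc'
    · exact hneg hc'
end

section
/- The analytic extension of Ψ to ℂ \ (−∞, −ξ] preserves the upper and lower half-planes: for c = u + yi with y > 0, Im Ψ(c) > 0, and for y < 0, Im Ψ(c) < 0. -/
open MeasureTheory Filter Set Topology

theorem psi_preserves_halfplanes (F : Measure ℝ) [IsProbabilityMeasure F]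
    (a : ℝ → ℝ) (ξ : ℝ)
    (ha : Measurable a) (hξ : ∀ᵐ x ∂F, ξ ≤ a x)
    (hnc : ¬ ∃ r : ℝ, a =ᵐ[F] fun _ => r)
    (hint : ∀ c : ℂ, ¬ (c.im = 0 ∧ c.re ≤ -ξ) →
      Integrable (fun x => ((a x : ℂ) + c)⁻¹) F) :
    ∀ c : ℂ,
      (0 < c.im → 0 < ((∫ x, ((a x : ℂ) + c)⁻¹ ∂F)⁻¹ - c).im) ∧
      (c.im < 0 → ((∫ x, ((a x : ℂ) + c)⁻¹ ∂F)⁻¹ - c).im < 0) := by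
  intro c
  suffices H : c.im ≠ 0 → ∃ k : ℝ, 0 < k ∧
      ((∫ x, ((a x : ℂ) + c)⁻¹ ∂F)⁻¹ - c).im = c.im * k by
    constructor
    · intro hy
      obtain ⟨k, hk, he⟩ := H (ne_of_gt hy)
      rw [he]; exact mul_pos hy hk
    · intro hy
      obtain ⟨k, hk, he⟩ := H (ne_of_lt hy)
      rw [he]; exact mul_neg_of_neg_of_pos hy hk
  intro hy
  set u := c.re with hu
  set y := c.im with hyd
  have hI : Integrable (fun x => ((a x : ℂ) + c)⁻¹) F :=
    hint c (by rintro ⟨h1, _⟩; exact hy h1)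
  set s : ℝ → ℝ := fun x => a x + u with hs
  set p : ℝ → ℝ := fun x => ((s x) ^ 2 + y ^ 2)⁻¹ with hp
  have hq : ∀ x, 0 < (s x) ^ 2 + y ^ 2 := fun x => by positivity
  have hppos : ∀ x, 0 < p x := fun x => inv_pos.2 (hq x)
  have hnsq : ∀ x, Complex.normSq ((a x : ℂ) + c) = (s x) ^ 2 + y ^ 2 := by
    intro x
    simp [Complex.normSq_apply, hs, ← hu, ← hyd]
    ring
  have hre : ∀ x, (((a x : ℂ) + c)⁻¹).re = s x * p x := by
    intro x
    rw [Complex.inv_re, hnsq, Complex.add_re, Complex.ofReal_re, div_eq_mul_inv]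
  have him : ∀ x, (((a x : ℂ) + c)⁻¹).im = -(y * p x) := by
    intro x
    rw [Complex.inv_im, hnsq, Complex.add_im, Complex.ofReal_im, zero_add,
      div_eq_mul_inv, neg_mul]
  -- measurability
  have hms : Measurable s := ha.add_const u
  have hmp : Measurable p := ((hms.pow_const 2).add_const (y ^ 2)).inv
  -- integrability
  have hIsp : Integrable (fun x => s x * p x) F :=
    hI.re.congr (ae_of_all _ fun x => hre x)
  have hIyp : Integrable (fun x => y * p x) F :=
    hI.im.neg.congr (ae_of_all _ fun x => by
      show -(((a x : ℂ) + c)⁻¹).im = y * p x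
      rw [him x, neg_neg])
  have hIp : Integrable p F := by
    have := hIyp.const_mul y⁻¹
    refine this.congr (ae_of_all _ fun x => ?_)
    show y⁻¹ * (y * p x) = p x
    rw [← mul_assoc, inv_mul_cancel₀ hy, one_mul]
  have hcm : ∀ (r : ℝ) (f : ℝ → ℝ), ∫ x, r * f x ∂F = r * ∫ x, f x ∂F :=
    fun r f => by simpa [smul_eq_mul] using integral_smul r f
  have hIs2p : Integrable (fun x => (s x) ^ 2 * p x) F := by
    refine Integrable.mono' (integrable_const (1 : ℝ))
      ((hms.pow_const 2).mul hmp).aestronglyMeasurable (ae_of_all _ fun x => ?_)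
    have h1 : 0 ≤ (s x) ^ 2 * p x := by positivity
    rw [Real.norm_eq_abs, abs_of_nonneg h1, hp]
    rw [← div_eq_mul_inv, div_le_one (hq x)]
    nlinarith [sq_nonneg y, sq_nonneg (s x)]
  set A := ∫ x, p x ∂F with hA
  set B := ∫ x, s x * p x ∂F with hB
  set C := ∫ x, (s x) ^ 2 * p x ∂F with hC
  have hApos : 0 < A := by
    rw [hA, integral_pos_iff_support_of_nonneg (fun x => (hppos x).le) hIp]
    have : Function.support p = Set.univ := by
      ext x; simp [(hppos x).ne']
    rw [this]
    simp
  have hCeq : C = 1 - y ^ 2 * A := by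
    have hpt : ∀ x, (s x) ^ 2 * p x = 1 - y ^ 2 * p x := by
      intro x
      rw [hp]
      field_simp
      ring
    have hIy2p : Integrable (fun x => y ^ 2 * p x) F := hIp.const_mul _
    rw [hC]
    simp_rw [hpt]
    rw [integral_sub (integrable_const 1) hIy2p, integral_const, hcm, probReal_univ]
    simp [hA]
  -- the strict Cauchy-Schwarz / variance step
  have hkey : 0 < A * C - B ^ 2 := by
    set t := B / A with ht
    have hfun : (fun x => (s x - t) ^ 2 * p x) =
        fun x => (s x) ^ 2 * p x - (2 * t) * (s x * p x) + t ^ 2 * p x := by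
      funext x; ring
    have hI1 : Integrable (fun x => 2 * t * (s x * p x)) F := hIsp.const_mul _
    have hI2 : Integrable (fun x => t ^ 2 * p x) F := hIp.const_mul _
    have hI3 : Integrable (fun x => s x ^ 2 * p x - 2 * t * (s x * p x)) F := hIs2p.sub hI1
    have hIv : Integrable (fun x => (s x - t) ^ 2 * p x) F := by
      rw [hfun]
      exact hI3.add hI2
    have hval : ∫ x, (s x - t) ^ 2 * p x ∂F = C - 2 * t * B + t ^ 2 * A := by
      rw [hfun, integral_add hI3 hI2, integral_sub hIs2p hI1, hcm, hcm,
        ← hB, ← hC, ← hA]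
    have hpos : 0 < ∫ x, (s x - t) ^ 2 * p x ∂F := by
      rcases (integral_nonneg (f := fun x => (s x - t) ^ 2 * p x) (fun x => by positivity :
          ∀ x, 0 ≤ (s x - t) ^ 2 * p x)).lt_or_eq with h | h
      · exact h
      · exfalso
        have h0 : (fun x => (s x - t) ^ 2 * p x) =ᵐ[F] 0 :=
          (integral_eq_zero_iff_of_nonneg (fun x => by positivity) hIv).1 h.symm
        refine hnc ⟨t - u, ?_⟩
        filter_upwards [h0] with x hx
        have : (s x - t) ^ 2 * p x = 0 := hx
        have h2 : (s x - t) ^ 2 = 0 := by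
          rcases mul_eq_zero.1 this with h' | h'
          · exact h'
          · exact absurd h' (hppos x).ne'
        have h3 : s x = t := by nlinarith [sq_nonneg (s x - t)]
        have h4 : a x + u = t := h3
        show a x = t - u
        linarith
    rw [hval, ht] at hpos
    have hA0 : A ≠ 0 := hApos.ne'
    have h5 : C - 2 * (B / A) * B + (B / A) ^ 2 * A = (A * C - B ^ 2) / A := by
      field_simp
      ring
    rw [h5] at hpos
    exact (div_pos_iff.1 hpos).resolve_right (fun h => absurd h.2 (not_lt.2 hApos.le)) |>.1
  -- compute real and imaginary parts of the integral
  have hDre : (∫ x, ((a x : ℂ) + c)⁻¹ ∂F).re = B := by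
    have h := integral_re hI
    simp only [RCLike.re_to_complex] at h
    rw [← h, hB]
    exact integral_congr_ae (ae_of_all _ fun x => hre x)
  have hDim : (∫ x, ((a x : ℂ) + c)⁻¹ ∂F).im = -(y * A) := by
    have h := integral_im hI
    simp only [RCLike.im_to_complex] at h
    rw [← h]
    have h2 : ∫ x, (((a x : ℂ) + c)⁻¹).im ∂F = ∫ x, -(y * p x) ∂F :=
      integral_congr_ae (ae_of_all _ fun x => him x)
    rw [h2, integral_neg, hcm, ← hA]
  have hN : 0 < B ^ 2 + y ^ 2 * A ^ 2 := by
    have h1 : 0 < y ^ 2 * A ^ 2 := by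
      have := pow_pos hApos 2
      have hy2 : 0 < y ^ 2 := by positivity
      exact mul_pos hy2 this
    nlinarith [sq_nonneg B]
  refine ⟨(A * C - B ^ 2) / (B ^ 2 + y ^ 2 * A ^ 2), div_pos hkey hN, ?_⟩
  have hN' : B ^ 2 + y ^ 2 * A ^ 2 ≠ 0 := hN.ne'
  rw [Complex.sub_im, Complex.inv_im, Complex.normSq_apply, hDre, hDim, ← hyd, hCeq]
  have h2 : B * B + -(y * A) * -(y * A) = B ^ 2 + y ^ 2 * A ^ 2 := by ring
  rw [h2, neg_neg, ← mul_div_assoc, div_sub' hN', div_eq_div_iff hN' hN']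
  ring
end

section
/- Suppose Ψ(c) − ξ − 1/H_ξ admits the representation Ψ(c) = ξ + 1/H_ξ + ∫_0^∞ (c+ξ)/(t(t+c+ξ)) ρ(dt) for c > −ξ, where ρ is a measure on (0,∞) with ∫_0^∞ 1/(t(t+1)) ρ(dt) < ∞. Then E := ∫_I a dF is finite if and only if ∫_0^∞ t^{-1} ρ(dt) < ∞, and in that case ∫_0^∞ t^{-1} ρ(dt) = E − ξ − 1/H_ξ. -/
open MeasureTheory Filter Set Topology
open scoped ENNReal

lemma auxA {t : ℝ} (ht : 0 < t) :
    Tendsto (fun u : ℝ => u / (t * (t + u))) atTop (𝓝 t⁻¹) := by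
  have h1 : Tendsto (fun u : ℝ => (t^2 / u + t)⁻¹) atTop (𝓝 t⁻¹) := by
    have : Tendsto (fun u : ℝ => t^2 / u + t) atTop (𝓝 (0 + t)) :=
      (tendsto_const_nhds.div_atTop tendsto_id).add tendsto_const_nhds
    rw [zero_add] at this
    exact this.inv₀ ht.ne'
  refine h1.congr' ?_
  filter_upwards [eventually_gt_atTop 0] with u hu
  have : t^2 / u + t = t * (t + u) / u := by field_simp
  rw [this, inv_div]

lemma auxA2 (A : ℝ) : Tendsto (fun u : ℝ => u * (A + u)⁻¹) atTop (𝓝 1) := by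
  have h1 : Tendsto (fun u : ℝ => (A / u + 1)⁻¹) atTop (𝓝 1) := by
    have : Tendsto (fun u : ℝ => A / u + 1) atTop (𝓝 (0 + 1)) :=
      (tendsto_const_nhds.div_atTop tendsto_id).add tendsto_const_nhds
    rw [zero_add] at this
    simpa using this.inv₀ one_ne_zero
  refine h1.congr' ?_
  filter_upwards [eventually_gt_atTop (max 0 (-A))] with u hu
  have hu0 : 0 < u := lt_of_le_of_lt (le_max_left _ _) hu
  have hAu : 0 < A + u := by have := lt_of_le_of_lt (le_max_right _ _) hu; linarith
  have : A / u + 1 = (A + u) / u := by field_simp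
  rw [this, inv_div, div_eq_mul_inv]

lemma auxB {t u v : ℝ} (ht : 0 < t) (hu : 0 < u) (huv : u ≤ v) :
    u / (t * (t + u)) ≤ v / (t * (t + v)) := by
  have hv : 0 < v := lt_of_lt_of_le hu huv
  rw [div_le_div_iff₀ (by positivity) (by positivity)]
  nlinarith [mul_nonneg (sub_nonneg.2 huv) (sq_nonneg t)]

lemma auxC {t u : ℝ} (ht : 0 < t) (hu : 0 < u) :
    u / (t * (t + u)) ≤ t⁻¹ := by
  rw [div_le_iff₀ (by positivity), inv_mul_eq_div, le_div_iff₀ ht]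
  nlinarith [mul_pos ht ht]

lemma auxD {t u : ℝ} (ht : 0 < t) (hu : 1 ≤ u) :
    u / (t * (t + u)) ≤ u * (1 / (t * (t + 1))) := by
  have hu0 : 0 < u := lt_of_lt_of_le one_pos hu
  rw [mul_one_div, div_le_div_iff₀ (by positivity) (by positivity)]
  nlinarith [mul_nonneg (mul_nonneg hu0.le ht.le) (sub_nonneg.2 hu)]

lemma auxE {ξ A c : ℝ} (hA : ξ ≤ A) (hc : |ξ| + 1 ≤ c) :
    min (A - ξ) c / 3 - |ξ| * (1 + |ξ|) ≤ c * (A * (A + c)⁻¹) := by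
  have habs : -ξ ≤ |ξ| := neg_le_abs ξ
  have habs2 : ξ ≤ |ξ| := le_abs_self ξ
  have habs0 : 0 ≤ |ξ| := abs_nonneg ξ
  have hc0 : 0 < c := by linarith
  have hd : (1:ℝ) ≤ A + c := by linarith
  have hd0 : 0 < A + c := by linarith
  have hb : 0 ≤ A - ξ := by linarith
  have hrw : c * (A * (A + c)⁻¹) = (c * (A - ξ) + ξ * c) / (A + c) := by
    field_simp; ring
  have h2a : c ≤ (1 + |ξ|) * (A + c) := by
    nlinarith [mul_le_mul_of_nonneg_left hd habs0]
  have h2 : |ξ| * c ≤ |ξ| * ((1 + |ξ|) * (A + c)) :=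
    mul_le_mul_of_nonneg_left h2a habs0
  have h3 : -(ξ * c) ≤ |ξ| * c := by nlinarith
  rcases le_total (A - ξ) c with h | h
  · rw [min_eq_left h, hrw, le_div_iff₀ hd0]
    have h1 : (A - ξ) * (A + c) ≤ (A - ξ) * (3 * c) :=
      mul_le_mul_of_nonneg_left (by linarith) hb
    nlinarith [h1, h2, h3]
  · rw [min_eq_right h, hrw, le_div_iff₀ hd0]
    have h1 : c * (A + c) ≤ c * (3 * (A - ξ)) :=
      mul_le_mul_of_nonneg_left (by linarith) hc0.le
    nlinarith [h1, h2, h3]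

lemma auxF {ξ A c : ℝ} (hA : ξ ≤ A) (hc : |ξ| + 1 ≤ c) :
    0 ≤ c * (A + c)⁻¹ ∧ c * (A + c)⁻¹ ≤ 1 + |ξ| := by
  have habs : -ξ ≤ |ξ| := neg_le_abs ξ
  have habs0 : 0 ≤ |ξ| := abs_nonneg ξ
  have hc0 : 0 < c := by linarith
  have hd : (1:ℝ) ≤ A + c := by linarith
  have hd0 : 0 < A + c := by linarith
  constructor
  · positivity
  · rw [← div_eq_mul_inv, div_le_iff₀ hd0]
    nlinarith [mul_le_mul_of_nonneg_left hd habs0]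

theorem E_finite_iff_rho_integrable (F : Measure ℝ) [IsProbabilityMeasure F]
    (a : ℝ → ℝ) (ξ : ℝ)
    (ha : Measurable a) (hξ : ∀ᵐ x ∂F, ξ ≤ a x)
    (hnc : ¬ ∃ r : ℝ, a =ᵐ[F] fun _ => r)
    (ρ : Measure ℝ) (hρ : ρ (Set.Iic 0) = 0)
    (hfin : ∫⁻ t, ENNReal.ofReal (1 / (t * (t + 1))) ∂ρ < ⊤)
    (Hξ : ℝ≥0∞) (hH : Hξ = ∫⁻ x, ENNReal.ofReal ((a x - ξ)⁻¹) ∂F)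
    (hrep : ∀ c : ℝ, -ξ < c →
      (∫ x, (a x + c)⁻¹ ∂F)⁻¹ - c
        = ξ + (Hξ⁻¹).toReal + ∫ t, (c + ξ) / (t * (t + c + ξ)) ∂ρ) :
    (Integrable a F ↔ ∫⁻ t, ENNReal.ofReal t⁻¹ ∂ρ < ⊤) ∧
      (Integrable a F →
        ∫ t, t⁻¹ ∂ρ = (∫ x, a x ∂F) - ξ - (Hξ⁻¹).toReal) := by
  have habs : -ξ ≤ |ξ| := neg_le_abs ξ
  have habs0 : 0 ≤ |ξ| := abs_nonneg ξ
  set s : ℕ → ℝ := fun n => (n : ℝ) + (|ξ| + 1) with hsdef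
  have hs2 : ∀ n, |ξ| + 1 ≤ s n := fun n => by
    simp only [hsdef]; have : (0:ℝ) ≤ (n:ℝ) := n.cast_nonneg; linarith
  have hs1 : ∀ n, (1:ℝ) ≤ s n + ξ := fun n => by have := hs2 n; linarith
  have hsξ : ∀ n, -ξ < s n := fun n => by have := hs1 n; linarith
  have hspos : ∀ n, 0 < s n := fun n => by have := hs2 n; linarith
  have hstop' : Tendsto s atTop atTop :=
    tendsto_atTop_add_const_right atTop (|ξ| + 1) tendsto_natCast_atTop_atTop
  have hstop : Tendsto (fun n : ℕ => s n + ξ) atTop atTop :=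
    tendsto_atTop_add_const_right atTop ξ hstop'
  -- F-side basics
  have haepos : ∀ n, ∀ᵐ x ∂F, 0 < a x + s n := fun n =>
    hξ.mono fun x hx => by have := hs1 n; linarith
  have hinv_meas : ∀ c : ℝ, Measurable fun x => (a x + c)⁻¹ := fun c => (ha.add_const c).inv
  have hg_int : ∀ n, Integrable (fun x => (a x + s n)⁻¹) F := by
    intro n
    refine Integrable.mono' (integrable_const 1) (hinv_meas (s n)).aestronglyMeasurable ?_
    filter_upwards [hξ] with x hx
    have h1 : (1:ℝ) ≤ a x + s n := by have := hs1 n; linarith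
    rw [Real.norm_eq_abs, abs_of_nonneg (by positivity)]
    exact inv_le_one_of_one_le₀ h1
  set g : ℕ → ℝ := fun n => ∫ x, (a x + s n)⁻¹ ∂F with hgdef
  have hg_pos : ∀ n, 0 < g n := by
    intro n
    have hnn : 0 ≤ᵐ[F] fun x => (a x + s n)⁻¹ :=
      (haepos n).mono fun x hx => by positivity
    rw [hgdef]
    rw [integral_pos_iff_support_of_nonneg_ae hnn (hg_int n)]
    have hc : F (Function.support fun x => (a x + s n)⁻¹)ᶜ = 0 := by
      have h0 : ∀ᵐ x ∂F, (a x + s n)⁻¹ ≠ 0 := (haepos n).mono fun x hx => by positivity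
      have := ae_iff.mp h0
      simpa [Function.support, Set.compl_setOf] using this
    have hms : MeasurableSet (Function.support fun x => (a x + s n)⁻¹) :=
      measurableSet_support (hinv_meas (s n))
    rw [prob_compl_eq_zero_iff hms] at hc
    rw [hc]
    norm_num
  set N : ℕ → ℝ := fun n => ∫ x, a x * (a x + s n)⁻¹ ∂F with hNdef
  have hN_int : ∀ n, Integrable (fun x => a x * (a x + s n)⁻¹) F := by
    intro n
    have h1 : Integrable (fun x => 1 - s n * (a x + s n)⁻¹) F :=
      (integrable_const 1).sub ((hg_int n).const_mul (s n))
    refine h1.congr ?_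
    filter_upwards [haepos n] with x hx
    field_simp; ring
  have hNg : ∀ n, N n = 1 - s n * g n := by
    intro n
    rw [hNdef, hgdef]
    calc (∫ x, a x * (a x + s n)⁻¹ ∂F)
        = ∫ x, ((1:ℝ) - s n * (a x + s n)⁻¹) ∂F := by
          refine integral_congr_ae ?_
          filter_upwards [haepos n] with x hx
          field_simp; ring
      _ = (∫ _, (1:ℝ) ∂F) - ∫ x, s n * (a x + s n)⁻¹ ∂F :=
          integral_sub (integrable_const 1) ((hg_int n).const_mul _)
      _ = 1 - s n * ∫ x, (a x + s n)⁻¹ ∂F := by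
          rw [integral_const_mul]; simp
  have hΨ : ∀ n, N n / g n
      = ξ + (Hξ⁻¹).toReal + ∫ t, (s n + ξ) / (t * (t + s n + ξ)) ∂ρ := by
    intro n
    have h := hrep (s n) (hsξ n)
    rw [← h]
    have hgne : g n ≠ 0 := (hg_pos n).ne'
    have hgg : (∫ x, (a x + s n)⁻¹ ∂F) = g n := rfl
    rw [hgg, hNg n]
    field_simp
  -- ρ-side
  have htpos : ∀ᵐ t ∂ρ, 0 < t := by
    rw [ae_iff]
    have : {t : ℝ | ¬ 0 < t} = Set.Iic 0 := by ext t; simp [not_lt]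
    rw [this]; exact hρ
  have hρmeas : ∀ n, Measurable fun t : ℝ => (s n + ξ) / (t * (t + s n + ξ)) := by
    intro n
    exact measurable_const.div (measurable_id.mul ((measurable_id.add_const (s n)).add_const ξ))
  set L : ℕ → ℝ≥0∞ :=
    fun n => ∫⁻ t, ENNReal.ofReal ((s n + ξ) / (t * (t + s n + ξ))) ∂ρ with hLdef
  have hr_eq : ∀ n, ∫ t, (s n + ξ) / (t * (t + s n + ξ)) ∂ρ = (L n).toReal := by
    intro n
    refine integral_eq_lintegral_of_nonneg_ae ?_ (hρmeas n).aestronglyMeasurable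
    filter_upwards [htpos] with t ht
    have h1 := hs1 n
    exact div_nonneg (by linarith) (mul_nonneg ht.le (by linarith))
  have hL_lt : ∀ n, L n < ⊤ := by
    intro n
    have hb : L n ≤ ENNReal.ofReal (s n + ξ) * ∫⁻ t, ENNReal.ofReal (1 / (t * (t + 1))) ∂ρ := by
      rw [hLdef, ← lintegral_const_mul' _ _ ENNReal.ofReal_ne_top]
      refine lintegral_mono_ae (htpos.mono fun t ht => ?_)
      rw [← ENNReal.ofReal_mul (by have := hs1 n; linarith)]
      refine ENNReal.ofReal_le_ofReal ?_
      have := auxD ht (hs1 n)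
      rw [add_assoc t (s n) ξ]
      exact this
    exact lt_of_le_of_lt hb (ENNReal.mul_lt_top ENNReal.ofReal_lt_top hfin)
  have hLle : ∀ n, L n ≤ ∫⁻ t, ENNReal.ofReal t⁻¹ ∂ρ := by
    intro n
    refine lintegral_mono_ae (htpos.mono fun t ht => ENNReal.ofReal_le_ofReal ?_)
    have := auxC ht (show 0 < s n + ξ by have := hs1 n; linarith)
    rw [add_assoc t (s n) ξ]
    exact this
  have hL_tendsto : Tendsto L atTop (𝓝 (∫⁻ t, ENNReal.ofReal t⁻¹ ∂ρ)) := by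
    refine lintegral_tendsto_of_tendsto_of_monotone
      (fun n => (ENNReal.measurable_ofReal.comp (hρmeas n)).aemeasurable) ?_ ?_
    · filter_upwards [htpos] with t ht
      intro m n hmn
      refine ENNReal.ofReal_le_ofReal ?_
      rw [add_assoc t (s m) ξ, add_assoc t (s n) ξ]
      refine auxB ht (by have := hs1 m; linarith) ?_
      have : (m:ℝ) ≤ (n:ℝ) := Nat.cast_le.2 hmn
      simp only [hsdef]; linarith
    · filter_upwards [htpos] with t ht
      have hreal : Tendsto (fun n => (s n + ξ) / (t * (t + s n + ξ))) atTop (𝓝 t⁻¹) := by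
        refine ((auxA ht).comp hstop).congr fun n => ?_
        simp only [Function.comp]
        rw [add_assoc t (s n) ξ]
      exact (ENNReal.continuous_ofReal.tendsto _).comp hreal
  by_cases hInt : Integrable a F
  · -- integrable case
    have hcg : Tendsto (fun n => s n * g n) atTop (𝓝 1) := by
      have h := tendsto_integral_of_dominated_convergence (μ := F)
        (F := fun n x => s n * (a x + s n)⁻¹) (f := fun _ => (1:ℝ))
        (fun _ => 1 + |ξ|)
        (fun n => ((hinv_meas (s n)).const_mul _).aestronglyMeasurable)
        (integrable_const _)
        (fun n => by
          filter_upwards [hξ] with x hx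
          obtain ⟨h0, h1⟩ := auxF hx (hs2 n)
          rw [Real.norm_eq_abs, abs_of_nonneg h0]
          exact h1)
        (Eventually.of_forall fun x => (auxA2 (a x)).comp hstop')
      simp only [integral_const, measure_univ, ENNReal.toReal_one, probReal_univ, smul_eq_mul,
        one_mul, mul_one] at h
      refine h.congr fun n => ?_
      rw [integral_const_mul]
    have hcN : Tendsto (fun n => s n * N n) atTop (𝓝 (∫ x, a x ∂F)) := by
      have h := tendsto_integral_of_dominated_convergence (μ := F)
        (F := fun n x => a x * (s n * (a x + s n)⁻¹)) (f := a)
        (fun x => |a x| * (1 + |ξ|))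
        (fun n => (ha.mul (((ha.add_const _).inv).const_mul _)).aestronglyMeasurable)
        (hInt.abs.mul_const _)
        (fun n => by
          filter_upwards [hξ] with x hx
          obtain ⟨h0, h1⟩ := auxF hx (hs2 n)
          rw [Real.norm_eq_abs, abs_mul, abs_of_nonneg h0]
          exact mul_le_mul_of_nonneg_left h1 (abs_nonneg _))
        (Eventually.of_forall fun x => by
          have := ((auxA2 (a x)).comp hstop').const_mul (a x)
          simpa using this)
      refine h.congr fun n => ?_
      rw [hNdef]
      rw [← integral_const_mul]
      refine integral_congr_ae (Eventually.of_forall fun x => by ring)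
    have hΨt : Tendsto (fun n => N n / g n) atTop (𝓝 (∫ x, a x ∂F)) := by
      have h := hcN.div hcg one_ne_zero
      rw [div_one] at h
      refine h.congr fun n => ?_
      simp only [Pi.div_apply]
      rw [mul_div_mul_left _ _ (hspos n).ne']
    have hrt : Tendsto (fun n => (L n).toReal) atTop
        (𝓝 ((∫ x, a x ∂F) - ξ - (Hξ⁻¹).toReal)) := by
      have heq : ∀ n, (L n).toReal = N n / g n - ξ - (Hξ⁻¹).toReal := by
        intro n
        rw [← hr_eq n, hΨ n]; ring
      exact ((hΨt.sub_const ξ).sub_const _).congr fun n => (heq n).symm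
    have hR0 : 0 ≤ (∫ x, a x ∂F) - ξ - (Hξ⁻¹).toReal :=
      ge_of_tendsto hrt (Eventually.of_forall fun n => ENNReal.toReal_nonneg)
    have hLof : Tendsto L atTop
        (𝓝 (ENNReal.ofReal ((∫ x, a x ∂F) - ξ - (Hξ⁻¹).toReal))) := by
      have h := (ENNReal.continuous_ofReal.tendsto _).comp hrt
      refine h.congr fun n => ?_
      simp only [Function.comp]
      exact ENNReal.ofReal_toReal (hL_lt n).ne
    have hkey : ∫⁻ t, ENNReal.ofReal t⁻¹ ∂ρ
        = ENNReal.ofReal ((∫ x, a x ∂F) - ξ - (Hξ⁻¹).toReal) :=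
      tendsto_nhds_unique hL_tendsto hLof
    refine ⟨⟨fun _ => hkey ▸ ENNReal.ofReal_lt_top, fun _ => hInt⟩, fun _ => ?_⟩
    rw [integral_eq_lintegral_of_nonneg_ae (htpos.mono fun t ht => inv_nonneg.2 ht.le)
      measurable_inv.aestronglyMeasurable, hkey, ENNReal.toReal_ofReal hR0]
  · -- non-integrable case
    have hbinf : ∫⁻ x, ENNReal.ofReal (a x - ξ) ∂F = ⊤ := by
      by_contra hne
      apply hInt
      have hb_int : Integrable (fun x => a x - ξ) F := by
        refine ⟨(ha.sub_const ξ).aestronglyMeasurable, ?_⟩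
        rw [hasFiniteIntegral_iff_ofReal (hξ.mono fun x hx => by show (0:ℝ) ≤ a x - ξ; linarith)]
        exact lt_top_iff_ne_top.2 hne
      have h2 := hb_int.add (integrable_const ξ)
      exact h2.congr (Eventually.of_forall fun x => by simp)
    have main : ¬ (∫⁻ t, ENNReal.ofReal t⁻¹ ∂ρ < ⊤) := by
      intro hlt
      set B : ℝ := ξ + (Hξ⁻¹).toReal + (∫⁻ t, ENNReal.ofReal t⁻¹ ∂ρ).toReal with hBdef
      have hΨle : ∀ n, N n / g n ≤ B := by
        intro n
        rw [hΨ n, hr_eq n, hBdef]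
        have h1 : (L n).toReal ≤ (∫⁻ t, ENNReal.ofReal t⁻¹ ∂ρ).toReal :=
          ENNReal.toReal_mono hlt.ne (hLle n)
        linarith
      have hsN_le : ∀ n, s n * N n ≤ |B| * (1 + |ξ|) := by
        intro n
        have h1 : N n ≤ B * g n := (div_le_iff₀ (hg_pos n)).1 (hΨle n)
        have h2 : s n * g n ≤ 1 + |ξ| := by
          have hmono := integral_mono_ae ((hg_int n).const_mul (s n)) (integrable_const (1+|ξ|))
            (hξ.mono fun x hx => (auxF hx (hs2 n)).2)
          rw [integral_const_mul] at hmono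
          simpa [measure_univ] using hmono
        have h3 : 0 ≤ s n * g n := mul_nonneg (hspos n).le (hg_pos n).le
        calc s n * N n ≤ s n * (B * g n) := mul_le_mul_of_nonneg_left h1 (hspos n).le
          _ = B * (s n * g n) := by ring
          _ ≤ |B| * (s n * g n) := mul_le_mul_of_nonneg_right (le_abs_self B) h3
          _ ≤ |B| * (1 + |ξ|) := mul_le_mul_of_nonneg_left h2 (abs_nonneg B)
      have hmin_meas : ∀ n, Measurable fun x => min (a x - ξ) (s n) :=
        fun n => (ha.sub_const ξ).min measurable_const
      have hmin_int : ∀ n, Integrable (fun x => min (a x - ξ) (s n)) F := by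
        intro n
        refine Integrable.mono' (integrable_const (s n)) (hmin_meas n).aestronglyMeasurable ?_
        filter_upwards [hξ] with x hx
        rw [Real.norm_eq_abs, abs_of_nonneg (le_min (by linarith) (hspos n).le)]
        exact min_le_right _ _
      set Mm : ℕ → ℝ≥0∞ := fun n => ∫⁻ x, ENNReal.ofReal (min (a x - ξ) (s n)) ∂F with hMmdef
      have hm_eq : ∀ n, ∫ x, min (a x - ξ) (s n) ∂F = (Mm n).toReal := fun n =>
        integral_eq_lintegral_of_nonneg_ae
          (hξ.mono fun x hx => by
            show (0:ℝ) ≤ min (a x - ξ) (s n)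
            exact le_min (by linarith) (hspos n).le)
          (hmin_meas n).aestronglyMeasurable
      have hMm_lt : ∀ n, Mm n < ⊤ := by
        intro n
        have hb : Mm n ≤ ∫⁻ _, ENNReal.ofReal (s n) ∂F :=
          lintegral_mono fun x => ENNReal.ofReal_le_ofReal (min_le_right _ _)
        rw [lintegral_const, measure_univ, mul_one] at hb
        exact lt_of_le_of_lt hb ENNReal.ofReal_lt_top
      have hMm_tendsto : Tendsto Mm atTop (𝓝 ⊤) := by
        rw [← hbinf]
        refine lintegral_tendsto_of_tendsto_of_monotone
          (fun n => (ENNReal.measurable_ofReal.comp (hmin_meas n)).aemeasurable) ?_ ?_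
        · refine Eventually.of_forall fun x m n hmn => ?_
          refine ENNReal.ofReal_le_ofReal (min_le_min le_rfl ?_)
          have : (m:ℝ) ≤ (n:ℝ) := Nat.cast_le.2 hmn
          simp only [hsdef]; linarith
        · refine Eventually.of_forall fun x => ?_
          refine (ENNReal.continuous_ofReal.tendsto _).comp ?_
          refine tendsto_const_nhds.congr' ?_
          filter_upwards [hstop'.eventually_ge_atTop (a x - ξ)] with n hn
          exact (min_eq_left hn).symm
      have hlow : ∀ n, (∫ x, min (a x - ξ) (s n) ∂F) / 3 - |ξ| * (1 + |ξ|) ≤ s n * N n := by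
        intro n
        have hRint : Integrable (fun x => s n * (a x * (a x + s n)⁻¹)) F :=
          (hN_int n).const_mul _
        have hLint : Integrable
            (fun x => min (a x - ξ) (s n) / 3 - |ξ| * (1 + |ξ|)) F :=
          ((hmin_int n).div_const 3).sub (integrable_const _)
        have hmono := integral_mono_ae hLint hRint
          (hξ.mono fun x hx => auxE hx (hs2 n))
        rw [integral_sub ((hmin_int n).div_const 3) (integrable_const _),
          integral_div, integral_const, integral_const_mul] at hmono
        simp only [measure_univ, ENNReal.toReal_one, probReal_univ, one_smul, smul_eq_mul, one_mul] at hmono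
        calc (∫ x, min (a x - ξ) (s n) ∂F) / 3 - |ξ| * (1 + |ξ|)
            ≤ s n * ∫ x, a x * (a x + s n)⁻¹ ∂F := hmono
          _ = s n * N n := rfl
      set C : ℝ := 3 * (|B| * (1 + |ξ|) + |ξ| * (1 + |ξ|) + 1) with hC
      have hCpos : 0 ≤ C := by positivity
      obtain ⟨n, hn⟩ := (hMm_tendsto.eventually_const_lt
        (show ENNReal.ofReal C < ⊤ from ENNReal.ofReal_lt_top)).exists
      have hmn : C < (Mm n).toReal := by
        rw [← ENNReal.ofReal_lt_iff_lt_toReal hCpos (hMm_lt n).ne]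
        exact hn
      have h4 := hlow n
      rw [hm_eq n] at h4
      have h5 := hsN_le n
      rw [hC] at hmn
      have h6 : (Mm n).toReal / 3 - |ξ| * (1 + |ξ|) ≤ |B| * (1 + |ξ|) := le_trans h4 h5
      set X : ℝ := (Mm n).toReal with hX
      set P : ℝ := |B| * (1 + |ξ|) with hP
      set K : ℝ := |ξ| * (1 + |ξ|) with hK
      linarith [hmn, h6]
    exact ⟨⟨fun h => (hInt h).elim, fun h => (main h).elim⟩, fun h => (hInt h).elim⟩
end
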